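/- arXiv:2512.20040 — 2 statements merged into one kernel-verified Lean document; each statement's English description precedes it below -/
import Mathlib

section
/- Let A be a real square matrix that is Hurwitz stable (every eigenvalue has negative real part), and let B be a real matrix such that B Bᵀ is positive definite. Then there exists a unique symmetric positive definite matrix P satisfying the Lyapunov equation A P + P Aᵀ + B Bᵀ = 0, given by P = ∫₀^∞ e^{tA} B Bᵀ e^{tAᵀ} dt. -/
open Matrix MeasureTheory

attribute [local instance] Matrix.linftyOpNormedAddCommGroup Matrix.linftyOpNormedRing
  Matrix.linftyOpNormedAlgebra

/-- A real square matrix is Hurwitz if every complex eigenvalue has negative real part. -/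
def IsHurwitz {N : ℕ} (A : Matrix (Fin N) (Fin N) ℝ) : Prop :=
  ∀ μ ∈ spectrum ℂ (A.map (Complex.ofReal)), μ.re < 0

/-!
Hurwitz stability makes `e^{tA}` decay exponentially: `e^A` is a polynomial in `A`, so testing
on eigenvectors puts `σ(e^A) ⊆ e^{σ(A)}` inside the open unit disc, and Gelfand's formula bounds
`‖e^{nA}‖` by `rⁿ` with `r < 1`. The flow `F_X(t) = e^{tA} X e^{tAᵀ}`
(`sylvesterFlow A Aᵀ X t`) therefore decays, and since `F_X' = F_{AX + XAᵀ}`, integrating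
over `(0, ∞)` gives `∫ F_{AY + YAᵀ} = -Y` for every `Y`. Read with `Y = P` this says that `P`
solves the Lyapunov equation, and read with `Y` a solution it says that `Y = P`. Finally `P` is
positive definite because every `e^{tA} B Bᵀ e^{tAᵀ}` is.
-/

open Filter Asymptotics Set NormedSpace Polynomial
open scoped NNReal

section Sylvester

variable {𝔸 : Type*} [NormedRing 𝔸] [NormedAlgebra ℝ 𝔸]

def IsExpStable (a : 𝔸) : Prop :=
  ∃ ε > 0, (fun t : ℝ => exp (t • a)) =O[atTop] fun t => Real.exp (-ε * t)

noncomputable def sylvesterFlow (a b X : 𝔸) (t : ℝ) : 𝔸 :=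
  exp (t • a) * X * exp (t • b)

variable {a b : 𝔸}

theorem sylvesterFlow_zero (a b X : 𝔸) : sylvesterFlow a b X 0 = X := by
  simp [sylvesterFlow]

theorem sylvesterFlow_neg (a b X : 𝔸) (t : ℝ) :
    sylvesterFlow a b (-X) t = -sylvesterFlow a b X t := by
  simp [sylvesterFlow]

theorem sylvesterFlow_mul_add_mul (a b Y : 𝔸) (t : ℝ) :
    sylvesterFlow a b (a * Y + Y * b) t =
      a * sylvesterFlow a b Y t + sylvesterFlow a b Y t * b := by
  have ha : Commute a (exp (t • a)) := ((Commute.refl a).smul_right t).exp_right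
  have hb : Commute (exp (t • b)) b := (((Commute.refl b).smul_right t).exp_right).symm
  simp only [sylvesterFlow, mul_add, add_mul, ← mul_assoc, ha.eq]
  simp only [mul_assoc, hb.eq]

theorem IsExpStable.isBigO_sylvesterFlow (ha : IsExpStable a) (hb : IsExpStable b) :
    ∃ ε > 0, ∀ X : 𝔸, sylvesterFlow a b X =O[atTop] fun t => Real.exp (-ε * t) := by
  obtain ⟨εa, hεa, ha⟩ := ha
  obtain ⟨εb, hεb, hb⟩ := hb
  refine ⟨εa + εb, by positivity, fun X => ?_⟩
  have := (ha.mul (isBigO_const_const X one_ne_zero atTop)).mul hb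
  refine this.congr_right fun t => ?_
  rw [mul_one, ← Real.exp_add]
  ring_nf

theorem IsExpStable.tendsto_sylvesterFlow (ha : IsExpStable a) (hb : IsExpStable b) (X : 𝔸) :
    Tendsto (sylvesterFlow a b X) atTop (nhds 0) := by
  obtain ⟨ε, hε, h⟩ := ha.isBigO_sylvesterFlow hb
  exact (h X).trans_tendsto <| Real.tendsto_exp_atBot.comp <|
    tendsto_id.const_mul_atTop_of_neg (neg_neg_iff_pos.2 hε)

variable [CompleteSpace 𝔸]

theorem hasDerivAt_sylvesterFlow (a b Y : 𝔸) (t : ℝ) :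
    HasDerivAt (sylvesterFlow a b Y)
      (a * sylvesterFlow a b Y t + sylvesterFlow a b Y t * b) t := by
  convert ((hasDerivAt_exp_smul_const' a t).mul_const Y).mul (hasDerivAt_exp_smul_const b t)
    using 1
  · rfl
  · simp only [sylvesterFlow, mul_assoc]

theorem continuous_sylvesterFlow (a b X : 𝔸) : Continuous (sylvesterFlow a b X) :=
  continuous_iff_continuousAt.2 fun t => (hasDerivAt_sylvesterFlow a b X t).continuousAt

theorem IsExpStable.integrableOn_sylvesterFlow (ha : IsExpStable a) (hb : IsExpStable b)
    (X : 𝔸) : IntegrableOn (sylvesterFlow a b X) (Ioi 0) := by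
  obtain ⟨ε, hε, h⟩ := ha.isBigO_sylvesterFlow hb
  have hloc : LocallyIntegrableOn (sylvesterFlow a b X) (Ici 0) :=
    (continuous_sylvesterFlow a b X).continuousOn.locallyIntegrableOn measurableSet_Ici
  exact (integrableOn_Ici_iff_integrableOn_Ioi).mp <| hloc.integrableOn_of_isBigO_atTop (h X)
    ⟨Ioi ε, Ioi_mem_atTop ε, exp_neg_integrableOn_Ioi ε hε⟩

theorem IsExpStable.setIntegral_sylvesterFlow_mul_add_mul (ha : IsExpStable a)
    (hb : IsExpStable b) (Y : 𝔸) :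
    ∫ t in Ioi 0, sylvesterFlow a b (a * Y + Y * b) t = -Y := by
  have hderiv (t : ℝ) :
      HasDerivAt (sylvesterFlow a b Y) (sylvesterFlow a b (a * Y + Y * b) t) t :=
    sylvesterFlow_mul_add_mul a b Y t ▸ hasDerivAt_sylvesterFlow a b Y t
  rw [integral_Ioi_of_hasDerivAt_of_tendsto (continuous_sylvesterFlow a b Y).continuousWithinAt
    (fun t _ => hderiv t) (ha.integrableOn_sylvesterFlow hb _) (ha.tendsto_sylvesterFlow hb Y),
    sylvesterFlow_zero, zero_sub]

theorem IsExpStable.sylvester_eq_zero_iff (ha : IsExpStable a) (hb : IsExpStable b) (X Y : 𝔸) :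
    a * Y + Y * b + X = 0 ↔ Y = ∫ t in Ioi 0, sylvesterFlow a b X t := by
  constructor
  · intro h
    rw [eq_neg_of_add_eq_zero_right h]
    simp_rw [sylvesterFlow_neg, integral_neg, ha.setIntegral_sylvesterFlow_mul_add_mul hb,
      neg_neg]
  · rintro rfl
    have hX := ha.integrableOn_sylvesterFlow hb X
    rw [← integral_const_mul_of_integrable hX, ← integral_mul_const_of_integrable hX,
      ← integral_add (hX.const_mul a) (hX.mul_const b)]
    simp_rw [← sylvesterFlow_mul_add_mul, ha.setIntegral_sylvesterFlow_mul_add_mul hb,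
      neg_add_cancel]

theorem isExpStable_of_isBigO_exp_pow {a : 𝔸} {r : ℝ} (hr0 : 0 < r) (hr1 : r < 1)
    (h : (fun n : ℕ => exp a ^ n) =O[atTop] fun n => r ^ n) : IsExpStable a := by
  -- the semigroup law `exp_add_of_commute` is stated for normed `ℚ`-algebras
  let _ : NormedAlgebra ℚ 𝔸 := NormedAlgebra.restrictScalars ℚ ℝ 𝔸
  refine ⟨-Real.log r, neg_pos.2 (Real.log_neg hr0 hr1), ?_⟩
  have hsplit (t : ℝ) : exp (t • a) = exp ((t - ⌊t⌋₊) • a) * exp a ^ ⌊t⌋₊ := by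
    rw [← NormedSpace.exp_nsmul,
      ← NormedSpace.exp_add_of_commute (((Commute.refl a).smul_left _).smul_right _),
      ← Nat.cast_smul_eq_nsmul ℝ, ← add_smul, sub_add_cancel]
  obtain ⟨K, hK⟩ := (isCompact_Icc (a := (0 : ℝ)) (b := 1)).exists_bound_of_continuousOn
    (f := fun s : ℝ => exp (s • a)) (by fun_prop)
  have hfract : (fun t : ℝ => exp ((t - ⌊t⌋₊) • a)) =O[atTop] fun _ => (1 : ℝ) := by
    refine IsBigO.of_bound K ?_
    filter_upwards [eventually_ge_atTop 0] with t ht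
    simpa using hK _ ⟨sub_nonneg.2 (Nat.floor_le ht), by linarith [Nat.lt_floor_add_one t]⟩
  have hfloor :
      (fun t : ℝ => r ^ ⌊t⌋₊) =O[atTop] fun t => Real.exp (-(-Real.log r) * t) := by
    refine IsBigO.of_bound r⁻¹ ?_
    filter_upwards [eventually_ge_atTop 0] with t ht
    rw [neg_neg, Real.norm_of_nonneg (by positivity), Real.norm_of_nonneg (by positivity),
      ← Real.rpow_def_of_pos hr0, ← Real.rpow_natCast]
    calc r ^ (⌊t⌋₊ : ℝ) ≤ r ^ (t - 1) :=
          Real.rpow_le_rpow_of_exponent_ge hr0 hr1.le (by linarith [Nat.lt_floor_add_one t])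
      _ = r⁻¹ * r ^ t := by rw [Real.rpow_sub hr0, Real.rpow_one, div_eq_inv_mul]
  simpa [← hsplit] using hfract.mul ((h.comp_tendsto tendsto_nat_floor_atTop).trans hfloor)

end Sylvester

theorem spectrum.isBigO_pow_of_spectralRadius_lt {A : Type*} [NormedRing A] [NormedAlgebra ℂ A]
    [CompleteSpace A] {a : A} {r : ℝ≥0} (h : spectralRadius ℂ a < r) :
    (fun n : ℕ => a ^ n) =O[atTop] fun n => (r : ℝ) ^ n := by
  refine IsBigO.of_bound 1 ?_
  filter_upwards [(pow_norm_pow_one_div_tendsto_nhds_spectralRadius a).eventually_lt_const h,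
    eventually_gt_atTop 0] with k hk hk0
  rw [← ENNReal.ofReal_coe_nnreal, ENNReal.ofReal_lt_ofReal_iff', one_div,
    Real.rpow_inv_lt_iff_of_pos (norm_nonneg _) r.coe_nonneg (Nat.cast_pos.2 hk0),
    Real.rpow_natCast] at hk
  rw [one_mul, Real.norm_of_nonneg (by positivity)]
  exact hk.1.le

theorem exists_aeval_eq_exp {𝕜 A : Type*} [RCLike 𝕜] [NormedRing A] [NormedAlgebra 𝕜 A]
    [FiniteDimensional 𝕜 A] (a : A) : ∃ p : 𝕜[X], aeval a p = exp a := by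
  have := FiniteDimensional.complete 𝕜 A
  let S := Subalgebra.toSubmodule (Algebra.adjoin 𝕜 {a})
  have hS : IsClosed (S : Set A) := S.closed_of_finiteDimensional
  have hexp : exp a ∈ S :=
    hS.mem_of_tendsto (exp_series_hasSum_exp' (𝕂 := 𝕜) a).tendsto_sum_nat
      (Eventually.of_forall fun k => S.sum_mem fun i _ => S.smul_mem _ <|
        Subalgebra.pow_mem _ (Algebra.self_mem_adjoin_singleton 𝕜 a) i)
  simpa [S, Algebra.adjoin_singleton_eq_range_aeval] using hexp

namespace Matrix

variable {n : Type*} [Fintype n]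

theorem linfty_opNorm_map_ofReal {m : Type*} [Fintype m] (M : Matrix m n ℝ) :
    ‖M.map Complex.ofReal‖ = ‖M‖ := by
  simp [linfty_opNorm_def]

variable [DecidableEq n]

theorem exp_mulVec_of_mulVec_eq_smul {C : Matrix n n ℂ} {μ : ℂ} {v : n → ℂ}
    (hv : C *ᵥ v = μ • v) : exp C *ᵥ v = Complex.exp μ • v := by
  have hpow (k : ℕ) : C ^ k *ᵥ v = μ ^ k • v := by
    induction k with
    | zero => simp
    | succ k ih => rw [pow_succ, ← mulVec_mulVec, hv, mulVec_smul, ih, smul_smul, pow_succ']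
  let L := (mulVecBilin ℂ ℂ (m := n) (n := n) (A := ℂ)).flip v
  refine ((exp_series_hasSum_exp' (𝕂 := ℂ) C).map L
    (LinearMap.continuous_of_finiteDimensional L)).unique ?_
  rw [Complex.exp_eq_exp_ℂ]
  convert (exp_series_hasSum_exp' (𝕂 := ℂ) μ).smul_const v using 1
  ext k : 1
  simp [L, mulVecBilin_apply, hpow, smul_smul]

-- With `exp C = p(C)`, spectral mapping for `p` writes each point of `σ(exp C)` as `p(μ)` with
-- `μ ∈ σ(C)`, and an eigenvector for `μ` shows that `p(μ) = e^μ`.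
theorem spectrum_exp_subset (C : Matrix n n ℂ) :
    spectrum ℂ (exp C) ⊆ Complex.exp '' spectrum ℂ C := by
  rcases subsingleton_or_nontrivial (Matrix n n ℂ) with _ | _
  · simp [spectrum.of_subsingleton]
  obtain ⟨p, hp⟩ := exists_aeval_eq_exp (𝕜 := ℂ) C
  -- restate `hp` for `exp` of the product topology rather than of the `L∞` operator norm
  replace hp : aeval C p = exp C := hp
  rw [← hp, spectrum.map_polynomial_aeval]
  rintro _ ⟨μ, hμ, rfl⟩
  refine ⟨μ, hμ, ?_⟩
  rw [← spectrum_toLin', ← Module.End.hasEigenvalue_iff_mem_spectrum] at hμ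
  obtain ⟨v, hv⟩ := hμ.exists_hasEigenvector
  have hCv : C *ᵥ v = μ • v := by simpa using hv.apply_eq_smul
  have hpv : aeval C p *ᵥ v = p.eval μ • v := by
    have h := Module.End.aeval_apply_of_hasEigenvector (p := p) hv
    rw [show toLin' C = (toLinAlgEquiv' : Matrix n n ℂ ≃ₐ[ℂ] _).toAlgHom C from rfl,
      aeval_algHom_apply] at h
    exact h
  rw [hp, exp_mulVec_of_mulVec_eq_smul hCv] at hpv
  exact smul_left_injective ℂ hv.2 hpv

theorem exp_map_ofReal (M : Matrix n n ℝ) :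
    (exp M).map Complex.ofReal = exp (M.map Complex.ofReal) :=
  NormedSpace.map_exp Complex.ofRealHom.mapMatrix
    (continuous_id.matrix_map Complex.continuous_ofReal) M

theorem _root_.IsExpStable.transpose {A : Matrix n n ℝ} (hA : IsExpStable A) :
    IsExpStable Aᵀ := by
  obtain ⟨ε, hε, h⟩ := hA
  let T := LinearMap.toContinuousLinearMap (transposeLinearEquiv n n ℝ ℝ).toLinearMap
  refine ⟨ε, hε, ((T.isBigO_comp _ _).congr_left fun t => ?_).trans h⟩
  change (exp (t • A))ᵀ = exp (t • Aᵀ)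
  rw [← exp_transpose, transpose_smul]

theorem PosDef.sylvesterFlow_transpose {Q : Matrix n n ℝ} (hQ : Q.PosDef) (A : Matrix n n ℝ)
    (t : ℝ) : (sylvesterFlow A Aᵀ Q t).PosDef := by
  change (exp (t • A) * Q * exp (t • Aᵀ)).PosDef
  rw [← transpose_smul, exp_transpose, ← conjTranspose_eq_transpose_of_trivial]
  exact hQ.mul_mul_conjTranspose_same (vecMul_injective_iff_isUnit.2 (isUnit_exp _))

theorem PosDef.setIntegral_sylvesterFlow_transpose {A Q : Matrix n n ℝ} (hA : IsExpStable A)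
    (hQ : Q.PosDef) : (∫ t in Ioi 0, sylvesterFlow A Aᵀ Q t).PosDef := by
  have hf := hA.integrableOn_sylvesterFlow hA.transpose Q
  have hpos (t : ℝ) := hQ.sylvesterFlow_transpose A t
  refine .of_dotProduct_mulVec_pos ?_ fun v hv => ?_
  · rw [isHermitian_iff_isSymm]
    let T := LinearMap.toContinuousLinearMap (transposeLinearEquiv n n ℝ ℝ).toLinearMap
    have hT : ∫ t in Ioi 0, (sylvesterFlow A Aᵀ Q t)ᵀ =
        (∫ t in Ioi 0, sylvesterFlow A Aᵀ Q t)ᵀ :=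
      T.integral_comp_comm hf
    rw [IsSymm, ← hT]
    exact integral_congr_ae <|
      ae_of_all _ fun t => (isHermitian_iff_isSymm.1 (hpos t).isHermitian).eq
  · let q := LinearMap.toContinuousLinearMap
      ((dotProductBilin ℝ ℝ (star v)).comp ((mulVecBilin ℝ ℝ).flip v))
    have hq : ∫ t in Ioi 0, star v ⬝ᵥ (sylvesterFlow A Aᵀ Q t *ᵥ v) =
        star v ⬝ᵥ ((∫ t in Ioi 0, sylvesterFlow A Aᵀ Q t) *ᵥ v) :=
      q.integral_comp_comm hf
    have hsupp :
        Function.support (fun t => star v ⬝ᵥ (sylvesterFlow A Aᵀ Q t *ᵥ v)) = univ :=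
      eq_univ_of_forall fun t => ((hpos t).dotProduct_mulVec_pos hv).ne'
    rw [← hq, integral_pos_iff_support_of_nonneg_ae
      (ae_of_all _ fun t => ((hpos t).dotProduct_mulVec_pos hv).le) (q.integrable_comp hf)]
    simp only [hsupp, Measure.restrict_apply_univ, Real.volume_Ioi, ENNReal.zero_lt_top]

end Matrix

theorem IsHurwitz.isExpStable {N : ℕ} {A : Matrix (Fin N) (Fin N) ℝ} (hA : IsHurwitz A) :
    IsExpStable A := by
  set E := exp (A.map Complex.ofReal)
  have hspec : ∀ z ∈ spectrum ℂ E, ‖z‖₊ < 1 := by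
    intro z hz
    obtain ⟨μ, hμ, rfl⟩ := spectrum_exp_subset _ hz
    rw [← NNReal.coe_lt_coe, coe_nnnorm, Complex.norm_exp]
    exact Real.exp_lt_one_iff.2 (hA μ hμ)
  have hρ : spectralRadius ℂ E < 1 := by
    rcases (spectrum ℂ E).eq_empty_or_nonempty with he | hne
    · simp [spectralRadius, he]
    · exact_mod_cast spectrum.spectralRadius_lt_of_forall_lt_of_nonempty hne hspec
  obtain ⟨r, hρr, hr1⟩ := ENNReal.lt_iff_exists_nnreal_btwn.1 hρ
  have hE : (exp A).map Complex.ofReal = E := exp_map_ofReal A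
  have hpow (k : ℕ) : ‖E ^ k‖ = ‖exp A ^ k‖ := by
    rw [← linfty_opNorm_map_ofReal (exp A ^ k), ← hE]
    exact congrArg norm (map_pow Complex.ofRealHom.mapMatrix (exp A) k).symm
  refine isExpStable_of_isBigO_exp_pow (r := r) ?_ (by exact_mod_cast hr1) ?_
  · exact_mod_cast zero_le.trans_lt hρr
  · exact .of_norm_left <|
      (spectrum.isBigO_pow_of_spectralRadius_lt hρr).norm_left.congr_left hpow

theorem stmt3 {N M : ℕ}
    (A : Matrix (Fin N) (Fin N) ℝ) (B : Matrix (Fin N) (Fin M) ℝ)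
    (hA : IsHurwitz A) (hB : (B * Bᵀ).PosDef) :
    let P : Matrix (Fin N) (Fin N) ℝ :=
      ∫ t in Set.Ioi (0 : ℝ),
        NormedSpace.exp (t • A) * (B * Bᵀ) * NormedSpace.exp (t • Aᵀ)
    P.IsSymm ∧ P.PosDef ∧ A * P + P * Aᵀ + B * Bᵀ = 0 ∧
      ∀ P' : Matrix (Fin N) (Fin N) ℝ,
        P'.IsSymm → P'.PosDef → A * P' + P' * Aᵀ + B * Bᵀ = 0 → P' = P := by
  intro P
  have hAs := hA.isExpStable
  have hsol (Y : Matrix (Fin N) (Fin N) ℝ) : A * Y + Y * Aᵀ + B * Bᵀ = 0 ↔ Y = P :=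
    hAs.sylvester_eq_zero_iff hAs.transpose (B * Bᵀ) Y
  have hPD : P.PosDef := hB.setIntegral_sylvesterFlow_transpose hAs
  exact ⟨isHermitian_iff_isSymm.1 hPD.isHermitian, hPD, (hsol P).2 rfl,
    fun P' _ _ h => (hsol P').1 h⟩
end

section
/- Suppose P and Q are symmetric matrices satisfying the two Lyapunov equations A P + P Aᵀ + B Bᵀ = 0 and Aᵀ Q + Q A + Cᵀ C = 0 for a real matrix A. Then tr(C P Cᵀ) = tr(Bᵀ Q B). -/
open Matrix

theorem stmt5 {N M p : ℕ}
    (A : Matrix (Fin N) (Fin N) ℝ) (B : Matrix (Fin N) (Fin M) ℝ)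
    (C : Matrix (Fin p) (Fin N) ℝ) (P Q : Matrix (Fin N) (Fin N) ℝ)
    (hP : P.IsSymm) (hQ : Q.IsSymm)
    (hLP : A * P + P * Aᵀ + B * Bᵀ = 0)
    (hLQ : Aᵀ * Q + Q * A + Cᵀ * C = 0) :
    (C * P * Cᵀ).trace = (Bᵀ * Q * B).trace := by
  have hC : Cᵀ * C = -(Aᵀ * Q + Q * A) := eq_neg_of_add_eq_zero_right hLQ
  have hB : B * Bᵀ = -(A * P + P * Aᵀ) := eq_neg_of_add_eq_zero_right hLP
  have e1 : (C * P * Cᵀ).trace = (Cᵀ * C * P).trace := by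
    rw [trace_mul_comm, ← Matrix.mul_assoc]
  have e2 : (Bᵀ * Q * B).trace = (B * Bᵀ * Q).trace := by
    rw [trace_mul_comm, ← Matrix.mul_assoc]
  rw [e1, e2, hC, hB]
  simp only [neg_mul, trace_neg, add_mul, trace_add, mul_assoc]
  rw [trace_mul_comm Aᵀ (Q*P), trace_mul_comm Q (A*P)]
  ring_nf
  rw [Matrix.mul_assoc Q P Aᵀ, trace_mul_comm Q (P * Aᵀ), Matrix.mul_assoc A P Q,
    Matrix.mul_assoc P Aᵀ Q]
  ring
end
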